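/- arXiv:2602.19080 — 2 statements merged into one kernel-verified Lean document; each statement's English description precedes it below -/
import Mathlib

section
/- If G is a path Pₙ on n ≥ 2 vertices, then 9·γ_{b,2}(Pₙ) ≤ ω(Pₙ) = 10 + 4(n − 2), i.e., 9·γ_{b,2}(Pₙ) ≤ 4n + 2. -/
open SimpleGraph

/-- The degree of a vertex, defined via the cardinality of its neighbor set. -/
noncomputable def deg {V : Type*} (G : SimpleGraph V) (v : V) : ℕ :=
  (G.neighborSet v).ncard

/-- `f` is a 2-limited dominating broadcast on `G`: `f : V → {0,1,2}` and every vertex `u`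
hears from some vertex `v` with `f v > 0` within distance `f v`. -/
def IsLD2 {V : Type*} (G : SimpleGraph V) (f : V → ℕ) : Prop :=
  (∀ v, f v ≤ 2) ∧ ∀ u, ∃ v, 0 < f v ∧ G.Reachable u v ∧ G.dist u v ≤ f v

/-- The cost of a broadcast. -/
noncomputable def cost {V : Type*} (f : V → ℕ) : ℕ := ∑ᶠ v, f v

/-- The 2-limited broadcast domination number. -/
noncomputable def gamma2 {V : Type*} (G : SimpleGraph V) : ℕ :=
  sInf {c | ∃ f, IsLD2 G f ∧ cost f = c}

lemma count3 (n : ℕ) : ((Finset.range n).filter (fun k => k % 3 = 1)).card = (n + 1) / 3 := by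
  induction n with
  | zero => simp
  | succ n ih =>
    rw [Finset.range_add_one, Finset.filter_insert]
    by_cases h : n % 3 = 1
    · rw [if_pos h, Finset.card_insert_of_notMem (by simp), ih]
      omega
    · rw [if_neg h, ih]
      omega

lemma adj_dist_le_one {n : ℕ} {u v : Fin n} (h : (pathGraph n).Adj u v) :
    (pathGraph n).dist u v ≤ 1 := by
  exact le_of_eq (dist_eq_one_iff_adj.mpr h)

theorem stmt9 (n : ℕ) (hn : 2 ≤ n) :
    9 * gamma2 (pathGraph n) ≤ 4 * n + 2 := by
  set P : Fin n → Prop := fun v => v.val % 3 = 1 ∨ (v.val = n - 1 ∧ n % 3 = 1) with hP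
  classical
  set f : Fin n → ℕ := fun v => if P v then 1 else 0 with hf
  have hld : IsLD2 (pathGraph n) f := by
    constructor
    · intro v; simp only [hf]; split <;> omega
    · intro u
      have htri : u.val % 3 = 0 ∨ u.val % 3 = 1 ∨ u.val % 3 = 2 := by omega
      rcases htri with h0 | h1 | h2
      · -- u.val % 3 = 0
        by_cases hlast : u.val = n - 1
        · -- then n % 3 = 1
          have hn3 : n % 3 = 1 := by omega
          refine ⟨u, ?_, Reachable.refl u, ?_⟩
          · simp only [hf, hP]
            rw [if_pos (Or.inr ⟨hlast, hn3⟩)]; norm_num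
          · rw [SimpleGraph.dist_self]; positivity
        · have hu : u.val + 1 < n := by omega
          refine ⟨⟨u.val + 1, hu⟩, ?_, ?_, ?_⟩
          · simp only [hf, hP]
            rw [if_pos (Or.inl (show _ % 3 = 1 from by omega))]; norm_num
          · exact Adj.reachable (pathGraph_adj.mpr (Or.inl rfl))
          · have := adj_dist_le_one (u := u) (v := ⟨u.val + 1, hu⟩) (pathGraph_adj.mpr (Or.inl rfl))
            simp only [hf, hP]
            rw [if_pos (Or.inl (show _ % 3 = 1 from by omega))]; exact this
      · refine ⟨u, ?_, Reachable.refl u, ?_⟩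
        · simp only [hf, hP]; rw [if_pos (Or.inl h1)]; norm_num
        · rw [SimpleGraph.dist_self]; positivity
      · have hu : u.val - 1 < n := by omega
        have hadj : (pathGraph n).Adj u ⟨u.val - 1, hu⟩ := by
          rw [pathGraph_adj]; right; simp; omega
        refine ⟨⟨u.val - 1, hu⟩, ?_, Adj.reachable hadj, ?_⟩
        · simp only [hf, hP]; rw [if_pos (Or.inl (show _ % 3 = 1 from by omega))]; norm_num
        · have := adj_dist_le_one hadj
          simp only [hf, hP]
          rw [if_pos (Or.inl (show _ % 3 = 1 from by omega))]; exact this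
  have hcost : cost f ≤ (n + 1) / 3 + (if n % 3 = 1 then 1 else 0) := by
    have h1 : cost f = (Finset.univ.filter P).card := by
      rw [cost, finsum_eq_sum_of_fintype, Finset.card_filter]
    have h2 : (Finset.univ.filter P).card ≤
        (Finset.univ.filter (fun v : Fin n => v.val % 3 = 1)).card
          + (if n % 3 = 1 then 1 else 0) := by
      by_cases hn3 : n % 3 = 1
      · rw [if_pos hn3]
        have hsub : Finset.univ.filter P ⊆
            insert ⟨n - 1, by omega⟩ (Finset.univ.filter (fun v : Fin n => v.val % 3 = 1)) := by
          intro v hv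
          simp only [Finset.mem_filter, Finset.mem_univ, true_and, hP] at hv
          rcases hv with h | ⟨h, _⟩
          · exact Finset.mem_insert_of_mem (by simp [h])
          · simp [Finset.mem_insert, Fin.ext_iff, h]
        calc (Finset.univ.filter P).card ≤ _ := Finset.card_le_card hsub
          _ ≤ _ := Finset.card_insert_le _ _
      · rw [if_neg hn3, add_zero]
        apply Finset.card_le_card
        intro v hv
        simp only [Finset.mem_filter, Finset.mem_univ, true_and, hP] at hv ⊢
        rcases hv with h | ⟨_, h⟩
        · exact h
        · exact absurd h hn3
    have h3 : (Finset.univ.filter (fun v : Fin n => v.val % 3 = 1)).card = (n + 1) / 3 := by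
      rw [← count3 n, Finset.card_filter, Finset.card_filter,
        Fin.sum_univ_eq_sum_range (fun k => if k % 3 = 1 then 1 else 0)]
    omega
  have hg : gamma2 (pathGraph n) ≤ cost f := Nat.sInf_le ⟨f, hld, rfl⟩
  by_cases hn3 : n % 3 = 1 <;> simp [hn3] at hcost <;> omega
end

section
/- Let G be a subcubic graph such that ω(G) < 9·γ_{b,2}(G) while ω(H) ≥ 9·γ_{b,2}(H) for every proper subgraph H of G, where ω(H) = 9n₀(H) + 5n₁(H) + 4n₂(H) + 3n₃(H) + 2b(H). Then every vertex of G has at most one neighbor of degree 1. -/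
open SimpleGraph

/-- `K₄*`: the graph obtained from `K₄` by subdividing one edge. Vertices `0,1,2,3` form
`K₄` minus the edge `01`, and vertex `4` subdivides that edge. -/
def K4star : SimpleGraph (Fin 5) :=
  SimpleGraph.fromEdgeSet {s(0,2), s(0,3), s(1,2), s(1,3), s(2,3), s(0,4), s(1,4)}

/-- A connected component is *bad* if the subgraph induced on it is isomorphic to `C₄`
or to `K₄*`. -/
def IsBadComponent {V : Type*} (G : SimpleGraph V) (c : G.ConnectedComponent) : Prop :=
  Nonempty (G.induce c.supp ≃g cycleGraph 4) ∨ Nonempty (G.induce c.supp ≃g K4star)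

/-- The number of bad connected components of `G`. -/
noncomputable def numBad {V : Type*} (G : SimpleGraph V) : ℕ :=
  Nat.card {c : G.ConnectedComponent // IsBadComponent G c}

/-- The number of vertices of degree `i` in `G`. -/
noncomputable def nd {V : Type*} (G : SimpleGraph V) (i : ℕ) : ℕ :=
  Nat.card {v : V // deg G v = i}

/-- The weight `ω(G) = 9n₀ + 5n₁ + 4n₂ + 3n₃ + 2b(G)`. -/
noncomputable def weight {V : Type*} (G : SimpleGraph V) : ℕ :=
  9 * nd G 0 + 5 * nd G 1 + 4 * nd G 2 + 3 * nd G 3 + 2 * numBad G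

/-!
Suppose some `v` had two leaves `u₁, u₂` and let `H` be the subgraph induced on
`S = V \ {v, u₁, u₂}`. A `2`-limited broadcast of `H` extends to `G` by letting `v` broadcast
with strength `1`, so `γ_{b,2}(G) ≤ γ_{b,2}(H) + 1`. On the other hand `ω(H) + 9 ≤ ω(G)`: the
vertices `v, u₁, u₂` contribute `ω(v) + 10 ≥ 13` to `ω(G)`, and since no vertex of `S` other
than the possible third neighbour `w` of `v` sees the deleted vertices, the only changes are in
the weight of `w` and in the bad component containing it, which together cost at most `4`.
Then `9 γ_{b,2}(G) ≤ 9 γ_{b,2}(H) + 9 ≤ ω(H) + 9 ≤ ω(G)`, contradicting `ω(G) < 9 γ_{b,2}(G)`.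
-/

namespace SimpleGraph

variable {V W : Type*} {G : SimpleGraph V}

lemma Reachable.dist_map_le {G' : SimpleGraph W} (φ : G →g G') {u v : V}
    (h : G.Reachable u v) : G'.dist (φ u) (φ v) ≤ G.dist u v := by
  obtain ⟨p, hp⟩ := h.exists_walk_length_eq_dist
  simpa [hp] using dist_le (p.map φ)

lemma supp_connectedComponentMk_eq_singleton {x : V} (hx : ∀ y, ¬G.Adj x y) :
    (G.connectedComponentMk x).supp = {x} := by
  ext y
  simp only [ConnectedComponent.mem_supp_iff, ConnectedComponent.eq, Set.mem_singleton_iff]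
  refine ⟨fun h ↦ ?_, fun h ↦ h ▸ .rfl⟩
  obtain ⟨p⟩ := h.symm
  cases p with
  | nil => rfl
  | cons hadj _ => exact absurd hadj (hx _)

end SimpleGraph

lemma Fintype.sum_add_eq_sum_add_of_forall_ne {ι M : Type*} [Fintype ι] [DecidableEq ι]
    [AddCommMonoid M] {f g : ι → M} (a : ι) (h : ∀ x ≠ a, f x = g x) :
    ∑ x, f x + g a = ∑ x, g x + f a := by
  rw [Fintype.sum_eq_add_sum_compl a f, Fintype.sum_eq_add_sum_compl a g,
    Finset.sum_congr rfl fun x hx ↦ h x (by simpa using hx)]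
  abel

lemma Fintype.sum_eq_add_sum_of_compl_eq {V M : Type*} [Fintype V] [AddCommMonoid M]
    {S : Set V} [Fintype S] {v u₁ u₂ : V} (hS : Sᶜ = {v, u₁, u₂}) (hvu₁ : v ≠ u₁) (hvu₂ : v ≠ u₂)
    (hu : u₁ ≠ u₂) (f : V → M) : ∑ x, f x = f v + f u₁ + f u₂ + ∑ x : S, f x := by
  classical
  rw [← Finset.sum_add_sum_compl {v, u₁, u₂} f,
    Finset.sum_subtype ({v, u₁, u₂}ᶜ : Finset V) (F := ‹_›)
      fun x ↦ by rw [← Set.notMem_compl_iff, hS]; simp,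
    Finset.sum_insert (by simp [hvu₁, hvu₂]), Finset.sum_pair hu]
  abel

section Broadcast

variable {V : Type*} {G : SimpleGraph V}

lemma isLD2_const_two : IsLD2 G fun _ ↦ 2 :=
  ⟨fun _ ↦ le_rfl, fun u ↦ ⟨u, two_pos, .rfl, by simp⟩⟩

lemma exists_isLD2_cost_eq_gamma2 : ∃ f, IsLD2 G f ∧ cost f = gamma2 G :=
  Nat.sInf_mem (s := {c | ∃ f, IsLD2 G f ∧ cost f = c}) ⟨_, _, isLD2_const_two, rfl⟩

lemma gamma2_le_cost {f : V → ℕ} (hf : IsLD2 G f) : gamma2 G ≤ cost f :=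
  Nat.sInf_le ⟨f, hf, rfl⟩

lemma gamma2_le_gamma2_coe_add_one [Fintype V] (H : G.Subgraph) {v : V} (hv : v ∉ H.verts)
    (hcov : ∀ u ∉ H.verts, u = v ∨ G.Adj u v) : gamma2 G ≤ gamma2 H.coe + 1 := by
  classical
  obtain ⟨f, hf, hcost⟩ := exists_isLD2_cost_eq_gamma2 (G := H.coe)
  let g : V → ℕ := fun x ↦ if hx : x ∈ H.verts then f ⟨x, hx⟩ else if x = v then 1 else 0
  have hgH (x : H.verts) : g x = f x := dif_pos x.2
  have hgv : g v = 1 := by simp [g, hv]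
  have hg : IsLD2 G g := by
    refine ⟨fun x ↦ ?_, fun u ↦ ?_⟩
    · by_cases hx : x ∈ H.verts
      · simpa [g, hx] using hf.1 ⟨x, hx⟩
      · simp only [g, hx, dite_false]; split_ifs <;> omega
    by_cases hu : u ∈ H.verts
    · obtain ⟨x, hx, hux, hdist⟩ := hf.2 ⟨u, hu⟩
      refine ⟨x, hgH x ▸ hx, hux.map H.hom, ?_⟩
      exact (hux.dist_map_le H.hom).trans (hgH x ▸ hdist)
    refine ⟨v, hgv ▸ one_pos, ?_⟩
    rcases hcov u hu with rfl | huv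
    · simp
    · exact ⟨huv.reachable, by rw [hgv, dist_eq_one_iff_adj.mpr huv]⟩
  have hout : ∑ x : {x // x ∉ H.verts}, g x = 1 := by
    rw [Fintype.sum_eq_single ⟨v, hv⟩ fun x hxv ↦ ?_]
    · exact hgv
    · simp [g, x.2, Subtype.ext_iff.not.mp hxv]
  have hcost_g : cost g = cost f + 1 := by
    rw [cost, cost, finsum_eq_sum_of_fintype, finsum_eq_sum_of_fintype,
      ← Fintype.sum_subtype_add_sum_subtype (· ∈ H.verts), hout, Fintype.sum_congr _ _ hgH]
  exact (gamma2_le_cost hg).trans (by rw [hcost_g, hcost])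

end Broadcast

section Weight

variable {V : Type*} {G : SimpleGraph V}

def vertexWeight : ℕ → ℕ
  | 0 => 9 | 1 => 5 | 2 => 4 | 3 => 3 | _ => 0

lemma weight_eq_sum_vertexWeight [Fintype V] (hG : ∀ v, deg G v ≤ 3) :
    weight G = ∑ v, vertexWeight (deg G v) + 2 * numBad G := by
  classical
  have hnd (i : ℕ) : nd G i = ∑ v, if deg G v = i then 1 else 0 := by
    rw [nd, Nat.card_eq_fintype_card, Fintype.card_subtype, Finset.sum_boole, Nat.cast_id]
  have hv (v : V) : vertexWeight (deg G v) = 9 * (if deg G v = 0 then 1 else 0) +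
      5 * (if deg G v = 1 then 1 else 0) + 4 * (if deg G v = 2 then 1 else 0) +
      3 * (if deg G v = 3 then 1 else 0) := by
    have := hG v
    interval_cases deg G v <;> rfl
  simp only [weight, hnd, hv, Finset.sum_add_distrib, Finset.mul_sum]

lemma IsBadComponent.nontrivial_supp {c : G.ConnectedComponent} (hc : IsBadComponent G c) :
    c.supp.Nontrivial := by
  rw [← Set.nontrivial_coe_sort]
  rcases hc with ⟨⟨e⟩⟩ | ⟨⟨e⟩⟩
  · exact e.toEquiv.nontrivial
  · exact e.toEquiv.nontrivial

lemma not_isBadComponent_of_deg_eq_zero [Finite V] {x : V} (hx : deg G x = 0) :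
    ¬IsBadComponent G (G.connectedComponentMk x) := by
  have hadj (y : V) : ¬G.Adj x y := by
    rw [deg, Set.ncard_eq_zero] at hx
    exact fun h ↦ (hx ▸ h : y ∈ (∅ : Set V))
  intro hc
  simpa [supp_connectedComponentMk_eq_singleton hadj] using hc.nontrivial_supp

end Weight

namespace SimpleGraph.Subgraph

variable {V : Type*} {G : SimpleGraph V}

section Degree

variable (H : G.Subgraph)

lemma deg_coe (x : H.verts) : deg H.coe x = (H.neighborSet x).ncard :=
  Nat.card_congr (H.coeNeighborSetEquiv x)

lemma deg_coe_add_ncard_sdiff [Finite V] (x : H.verts) :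
    deg H.coe x + (G.neighborSet x \ H.neighborSet x).ncard = deg G x := by
  rw [deg_coe, add_comm, Set.ncard_sdiff_add_ncard_of_subset (H.neighborSet_subset x), deg]

lemma deg_coe_eq_of_forall_adj [Finite V] {x : H.verts} (hx : ∀ y, G.Adj x y → H.Adj x y) :
    deg H.coe x = deg G x := by
  have : G.neighborSet x \ H.neighborSet x = ∅ := Set.sdiff_eq_empty.mpr hx
  simpa [this] using H.deg_coe_add_ncard_sdiff x

lemma neighborSet_sdiff_neighborSet_top_induce {S : Set V} {x : V} (hx : x ∈ S) :
    G.neighborSet x \ ((⊤ : G.Subgraph).induce S).neighborSet x = G.neighborSet x \ S := by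
  ext y
  simp only [Set.mem_sdiff, mem_neighborSet, Subgraph.mem_neighborSet, Subgraph.induce_adj,
    Subgraph.top_adj]
  tauto

def IsClosedComponent (c : H.coe.ConnectedComponent) : Prop :=
  ∀ x ∈ c.supp, ∀ y, G.Adj x y → H.Adj x y

end Degree

section Components

variable {H : G.Subgraph}

lemma IsClosedComponent.supp_map_hom {c : H.coe.ConnectedComponent}
    (hc : H.IsClosedComponent c) : (c.map H.hom).supp = Subtype.val '' c.supp := by
  ext y
  refine ⟨fun hy ↦ ?_, ?_⟩
  · obtain ⟨x, hx⟩ := c.nonempty_supp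
    rw [ConnectedComponent.mem_supp_iff, ← (c.mem_supp_iff x).mp hx, ConnectedComponent.map_mk,
      ConnectedComponent.eq] at hy
    refine hy.symm.mem_subgraphVerts (H := (⊤ : G.Subgraph).induce _) ?_ ⟨x, hx, rfl⟩
    rintro _ ⟨a, ha, rfl⟩ b hab
    have hab' := hc a ha b hab
    exact ⟨⟨a, ha, rfl⟩, ConnectedComponent.mem_coe_supp_of_adj ⟨a, ha, rfl⟩
      (H.edge_vert hab'.symm) hab', hab⟩
  · rintro ⟨y, hy, rfl⟩
    rw [ConnectedComponent.mem_supp_iff] at hy ⊢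
    rw [← hy, ConnectedComponent.map_mk]
    rfl

lemma IsClosedComponent.isBadComponent_map_hom {c : H.coe.ConnectedComponent}
    (hc : H.IsClosedComponent c) (hb : IsBadComponent H.coe c) :
    IsBadComponent G (c.map H.hom) := by
  have e : H.coe.induce c.supp ≃g G.induce (Subtype.val '' c.supp) :=
    { toEquiv := Equiv.Set.image _ _ Subtype.val_injective
      map_rel_iff' := fun {a b} ↦ ⟨hc a a.2 b, Subgraph.adj_sub _⟩ }
  rw [← hc.supp_map_hom] at e
  exact hb.imp (fun ⟨i⟩ ↦ ⟨e.symm.trans i⟩) (fun ⟨i⟩ ↦ ⟨e.symm.trans i⟩)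

lemma numBad_coe_le_add_ncard [Finite V] :
    numBad H.coe ≤ numBad G + {c | IsBadComponent H.coe c ∧ ¬H.IsClosedComponent c}.ncard := by
  have hclosed : {c | IsBadComponent H.coe c ∧ H.IsClosedComponent c}.ncard ≤ numBad G := by
    refine Set.ncard_le_ncard_of_injOn (ConnectedComponent.map H.hom)
      (fun c hc ↦ hc.2.isBadComponent_map_hom hc.1) (fun c hc d hd hcd ↦ ?_) (Set.toFinite _)
    have hsupp := congrArg ConnectedComponent.supp hcd
    rw [hc.2.supp_map_hom, hd.2.supp_map_hom] at hsupp
    exact ConnectedComponent.supp_injective (Set.image_injective.mpr Subtype.val_injective hsupp)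
  rw [show numBad H.coe = {c | IsBadComponent H.coe c}.ncard from rfl,
    ← Set.ncard_inter_add_ncard_sdiff_eq_ncard _ {c | H.IsClosedComponent c}]
  exact Nat.add_le_add_right hclosed _

lemma numBad_coe_le [Finite V] (h : ∀ x : H.verts, ∀ y, G.Adj x y → H.Adj x y) :
    numBad H.coe ≤ numBad G := by
  have hempty : {c | IsBadComponent H.coe c ∧ ¬H.IsClosedComponent c} = ∅ :=
    Set.eq_empty_of_forall_notMem fun c hc ↦ hc.2 fun x _ ↦ h x
  simpa [hempty] using numBad_coe_le_add_ncard (H := H)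

lemma eq_connectedComponentMk_of_not_isClosedComponent {x : H.verts}
    (h : ∀ z ≠ x, ∀ y, G.Adj z y → H.Adj z y) {c : H.coe.ConnectedComponent}
    (hc : ¬H.IsClosedComponent c) : c = H.coe.connectedComponentMk x := by
  obtain ⟨z, hz, y, hzy, hnot⟩ : ∃ z ∈ c.supp, ∃ y, G.Adj z y ∧ ¬H.Adj z y := by
    simpa [IsClosedComponent] using hc
  obtain rfl : z = x := by_contra fun hzx ↦ hnot (h z hzx y hzy)
  exact ((c.mem_supp_iff z).mp hz).symm

lemma numBad_coe_le_add_one [Finite V] (x : H.verts)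
    (h : ∀ z ≠ x, ∀ y, G.Adj z y → H.Adj z y) : numBad H.coe ≤ numBad G + 1 := by
  have hsub : {c | IsBadComponent H.coe c ∧ ¬H.IsClosedComponent c} ⊆
      {H.coe.connectedComponentMk x} :=
    fun c hc ↦ eq_connectedComponentMk_of_not_isClosedComponent h hc.2
  exact numBad_coe_le_add_ncard.trans
    (Nat.add_le_add_left ((Set.ncard_le_ncard hsub).trans (Set.ncard_singleton _).le) _)

lemma numBad_coe_le_of_not_isBadComponent [Finite V] (x : H.verts)
    (h : ∀ z ≠ x, ∀ y, G.Adj z y → H.Adj z y)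
    (hx : ¬IsBadComponent H.coe (H.coe.connectedComponentMk x)) : numBad H.coe ≤ numBad G := by
  have hempty : {c | IsBadComponent H.coe c ∧ ¬H.IsClosedComponent c} = ∅ :=
    Set.eq_empty_of_forall_notMem fun c hc ↦
      hx (eq_connectedComponentMk_of_not_isClosedComponent h hc.2 ▸ hc.1)
  simpa [hempty] using numBad_coe_le_add_ncard (H := H)

end Components

section Weight

variable [Fintype V] (H : G.Subgraph) [Fintype H.verts]

lemma weight_coe_le (hsub : ∀ x, deg G x ≤ 3) (h : ∀ x : H.verts, ∀ y, G.Adj x y → H.Adj x y) :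
    weight H.coe ≤ ∑ x : H.verts, vertexWeight (deg G x) + 2 * numBad G := by
  have hdeg (x : H.verts) : deg H.coe x = deg G x := H.deg_coe_eq_of_forall_adj (h x)
  rw [weight_eq_sum_vertexWeight fun x ↦ hdeg x ▸ hsub x,
    Fintype.sum_congr _ _ fun x ↦ congrArg vertexWeight (hdeg x)]
  have := numBad_coe_le h
  omega

/-- The `4` is attained when `w` becomes isolated; otherwise the weight of `w` grows by `1` and
its component may have become bad. -/
lemma weight_coe_le_add_four (hsub : ∀ x, deg G x ≤ 3) (w : H.verts)
    (hw : (G.neighborSet w \ H.neighborSet w).ncard = 1)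
    (h : ∀ x ≠ w, ∀ y, G.Adj x y → H.Adj x y) :
    weight H.coe ≤ ∑ x : H.verts, vertexWeight (deg G x) + 2 * numBad G + 4 := by
  classical
  have hdegw : deg H.coe w + 1 = deg G w := hw ▸ H.deg_coe_add_ncard_sdiff w
  have hsum := Fintype.sum_add_eq_sum_add_of_forall_ne
    (f := fun x ↦ vertexWeight (deg H.coe x)) (g := fun x : H.verts ↦ vertexWeight (deg G x)) w
    fun x hxw ↦ congrArg vertexWeight (H.deg_coe_eq_of_forall_adj (h x hxw))
  rw [weight_eq_sum_vertexWeight fun x ↦ (Nat.le_add_right _ _).trans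
    ((H.deg_coe_add_ncard_sdiff x).trans_le (hsub x))]
  by_cases hw1 : deg G w = 1
  · have hw0 : deg H.coe w = 0 := by omega
    have hb := numBad_coe_le_of_not_isBadComponent _ h (not_isBadComponent_of_deg_eq_zero hw0)
    have : vertexWeight (deg G w) + 4 = vertexWeight (deg H.coe w) := by rw [hw0, hw1]; rfl
    omega
  · have hb := numBad_coe_le_add_one _ h
    have : vertexWeight (deg H.coe w) = vertexWeight (deg G w) + 1 := by
      have := hsub w
      obtain h | h : deg H.coe w = 1 ∨ deg H.coe w = 2 := by omega
      all_goals rw [← hdegw, h]; rfl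
    omega

end Weight

end SimpleGraph.Subgraph

lemma eq_of_adj_of_deg_eq_one {V : Type*} {G : SimpleGraph V} {u v w : V} (hu : deg G u = 1)
    (hv : G.Adj u v) (hw : G.Adj u w) : w = v := by
  obtain ⟨a, ha⟩ := Set.ncard_eq_one.mp hu
  have hv' : v ∈ G.neighborSet u := hv
  have hw' : w ∈ G.neighborSet u := hw
  rw [ha] at hv' hw'
  exact hw'.trans hv'.symm

section TwoLeaves

variable {V : Type*} {G : SimpleGraph V} {v u₁ u₂ : V} {S : Set V}

lemma neighborSet_sdiff_subset_of_compl_eq (hS : Sᶜ = {v, u₁, u₂}) (h₁ : G.Adj v u₁)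
    (h₂ : G.Adj v u₂) (d₁ : deg G u₁ = 1) (d₂ : deg G u₂ = 1) {x : V} (hx : x ∈ S) :
    G.neighborSet x \ S ⊆ {v} := by
  have hxv : x ≠ v := by
    rintro rfl
    rw [← Set.notMem_compl_iff, hS] at hx
    simp at hx
  rintro y ⟨hxy, hy⟩
  rw [← Set.mem_compl_iff, hS] at hy
  obtain rfl | rfl | rfl := hy
  · rfl
  · exact absurd (eq_of_adj_of_deg_eq_one d₁ h₁.symm hxy.symm) hxv
  · exact absurd (eq_of_adj_of_deg_eq_one d₂ h₂.symm hxy.symm) hxv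

lemma deg_eq_two_add_ncard_inter_of_compl_eq [Finite V] (hS : Sᶜ = {v, u₁, u₂})
    (h₁ : G.Adj v u₁) (h₂ : G.Adj v u₂) (hu : u₁ ≠ u₂) :
    deg G v = 2 + (G.neighborSet v ∩ S).ncard := by
  have : G.neighborSet v \ S = {u₁, u₂} := by
    rw [Set.sdiff_eq_compl_inter, hS]
    ext y
    simp only [Set.mem_inter_iff, Set.mem_insert_iff, Set.mem_singleton_iff, mem_neighborSet]
    constructor
    · rintro ⟨rfl | h, hvy⟩
      · exact absurd rfl hvy.ne
      · exact h
    · rintro (rfl | rfl)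
      · exact ⟨by tauto, h₁⟩
      · exact ⟨by tauto, h₂⟩
  rw [deg, ← Set.ncard_inter_add_ncard_sdiff_eq_ncard _ S, this, Set.ncard_pair hu, add_comm]

theorem weight_coe_induce_add_nine_le_of_compl_eq [Fintype V] (hsub : ∀ x, deg G x ≤ 3)
    (hS : Sᶜ = {v, u₁, u₂}) (h₁ : G.Adj v u₁) (h₂ : G.Adj v u₂) (hu : u₁ ≠ u₂)
    (d₁ : deg G u₁ = 1) (d₂ : deg G u₂ = 1) :
    weight ((⊤ : G.Subgraph).induce S).coe + 9 ≤ weight G := by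
  classical
  let H := (⊤ : G.Subgraph).induce S
  show weight H.coe + 9 ≤ weight G
  have hG : weight G = vertexWeight (deg G v) + 10 + ∑ x : H.verts, vertexWeight (deg G x) +
      2 * numBad G := by
    rw [weight_eq_sum_vertexWeight hsub, Fintype.sum_eq_add_sum_of_compl_eq (S := H.verts) hS h₁.ne h₂.ne hu,
      d₁, d₂]
    rfl
  have hadj (x : H.verts) (hvx : ¬G.Adj v x) (y : V) (hxy : G.Adj x y) : H.Adj x y := by
    refine ⟨x.2, by_contra fun hy ↦ hvx ?_, hxy⟩
    obtain rfl := neighborSet_sdiff_subset_of_compl_eq hS h₁ h₂ d₁ d₂ x.2 ⟨hxy, hy⟩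
    exact hxy.symm
  have hv := deg_eq_two_add_ncard_inter_of_compl_eq hS h₁ h₂ hu
  have hW : (G.neighborSet v ∩ S).Subsingleton :=
    Set.ncard_le_one_iff_subsingleton.mp (by have := hsub v; omega)
  rcases hW.eq_empty_or_singleton with hW | ⟨w, hW⟩
  · have hH := H.weight_coe_le hsub fun x ↦ hadj x fun hvx ↦ hW.subset ⟨hvx, x.2⟩
    have : vertexWeight (deg G v) = 4 := by rw [hv, hW, Set.ncard_empty]; rfl
    omega
  · obtain ⟨hvw, hw⟩ : G.Adj v w ∧ w ∈ S := hW.symm.subset rfl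
    have hwv : G.neighborSet w \ H.neighborSet w = {v} := by
      rw [Subgraph.neighborSet_sdiff_neighborSet_top_induce hw]
      refine (neighborSet_sdiff_subset_of_compl_eq hS h₁ h₂ d₁ d₂ hw).antisymm ?_
      simp [← Set.mem_compl_iff, hS, hvw.symm]
    have hH := H.weight_coe_le_add_four hsub ⟨w, hw⟩ (by simp [hwv]) fun x hxw ↦
      hadj x fun hvx ↦ hxw (Subtype.ext (hW.subset ⟨hvx, x.2⟩))
    have : vertexWeight (deg G v) = 3 := by rw [hv, hW, Set.ncard_singleton]; rfl
    omega

end TwoLeaves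

theorem stmt18 {V : Type*} [Fintype V] (G : SimpleGraph V)
    (hsub : ∀ v, deg G v ≤ 3)
    (hG : weight G < 9 * gamma2 G)
    (hmin : ∀ H : G.Subgraph, H ≠ ⊤ →
      9 * gamma2 H.coe ≤ weight H.coe) :
    ∀ v : V, ({u | G.Adj v u ∧ deg G u = 1}).ncard ≤ 1 := by
  intro v
  by_contra! h
  obtain ⟨u₁, ⟨h₁, d₁⟩, u₂, ⟨h₂, d₂⟩, hu⟩ := (Set.one_lt_ncard (Set.toFinite _)).mp h
  set S : Set V := {v, u₁, u₂}ᶜ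
  have hS : Sᶜ = {v, u₁, u₂} := compl_compl _
  have hvS : v ∉ S := by simp [S]
  have hH : (⊤ : G.Subgraph).induce S ≠ ⊤ := fun h ↦ by
    simpa [hvS] using congrArg (v ∈ ·.verts) h
  have hγ : gamma2 G ≤ gamma2 ((⊤ : G.Subgraph).induce S).coe + 1 := by
    refine gamma2_le_gamma2_coe_add_one _ hvS fun u hu ↦ ?_
    have hu : u ∈ Sᶜ := hu
    rw [hS] at hu
    rcases hu with rfl | rfl | rfl
    exacts [.inl rfl, .inr h₁.symm, .inr h₂.symm]
  have hω := weight_coe_induce_add_nine_le_of_compl_eq hsub hS h₁ h₂ hu d₁ d₂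
  have := hmin _ hH
  omega
end
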